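/- Let γ ≥ 3 be an integer and let T be a tree on n vertices with domination number γ. Then ξ^{ee}(T) ≤ (10n − 3γ − 7)/12, with equality if and only if T is isomorphic to T_{n,γ}. -/

import Mathlib

/-!
Root the tree `T` at a central vertex `c`: the centre if the diameter is even, one of the two
central vertices if it is odd. Since `γ ≥ 3` the diameter is at least `4`, so every eccentricity
is at least `2` and only `c` can have eccentricity `2`. Every edge joins a vertex `v ≠ c` to its
parent towards `c`, and contributes `1/ε(v) + 1/ε(par v) ≤ 1/3 + 1/2`, or `≤ 1/4 + 1/3` when
`ε(v) ≥ 4`. The vertices of eccentricity at most `3` are `c` and its neighbours, so `c` together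
with the `k` vertices of eccentricity at least `4` dominates `T`: `γ ≤ k + 1`. Summing,
`ξ^{ee}(T) ≤ 5(n - 1)/6 - k/4 ≤ (10n - 3γ - 7)/12`.

In the case of equality every edge attains its bound and `k = γ - 1`: the neighbours of `c` have
eccentricity `3`, the other vertices have eccentricity `4` and hang from distinct neighbours of
`c` (otherwise fewer than `γ` vertices would dominate), so `T ≅ T_{n,γ}`. Conversely the
eccentricities `2, 3, 4` of the centre, the star leaves and the pendant vertices of `T_{n,γ}`
give equality.
-/

open SimpleGraph

variable {V : Type*}

noncomputable def ecc (G : SimpleGraph V) (v : V) : ℕ := ⨆ u : V, G.dist v u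

noncomputable def deg (G : SimpleGraph V) (v : V) : ℕ := (G.neighborSet v).ncard

noncomputable def ree {V : Type*} [Fintype V] (G : SimpleGraph V) : ℝ :=
  letI := Classical.decEq V
  letI := Classical.decRel G.Adj
  ∑ e ∈ G.edgeFinset,
    Sym2.lift ⟨fun u v => 1 / (ecc G u : ℝ) + 1 / (ecc G v : ℝ), fun _ _ => by ring⟩ e

noncomputable def gdiam (G : SimpleGraph V) : ℕ := ⨆ v : V, ecc G v

/-- The domination number of a graph: the minimum size of a dominating set. -/
noncomputable def domNum {W : Type*} (G : SimpleGraph W) : ℕ :=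
  sInf {m | ∃ D : Set W, (∀ x : W, x ∈ D ∨ ∃ y ∈ D, G.Adj x y) ∧ D.ncard = m}

/-- The tree `T_{n,β}` (for n ≥ 2β): vertex 0 is the center of a star with n-β
leaves (vertices 1, …, n-β), and a new pendant vertex is attached to each of the
β-1 leaves 1, …, β-1 (the pendant attached to `i` is vertex `i + (n-β)`). -/
def Tnb (n b : ℕ) : SimpleGraph (Fin n) :=
  SimpleGraph.fromRel (fun x y => (x.val = 0 ∧ 1 ≤ y.val ∧ y.val ≤ n - b) ∨
    (1 ≤ x.val ∧ x.val ≤ b - 1 ∧ y.val = x.val + (n - b)))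

open Finset

section Eccentricity

variable {G : SimpleGraph V}

lemma ecc_le {v : V} {k : ℕ} (h : ∀ u, G.dist v u ≤ k) : ecc G v ≤ k :=
  ciSup_le' h

variable [Fintype V]

lemma dist_le_ecc (v u : V) : G.dist v u ≤ ecc G v :=
  le_ciSup (Set.finite_range _).bddAbove u

lemma ecc_le_dist_add_ecc (hG : G.Connected) (u v : V) : ecc G u ≤ G.dist u v + ecc G v :=
  ecc_le fun w => hG.dist_triangle.trans (Nat.add_le_add_left (dist_le_ecc v w) _)

lemma ecc_le_ecc_add_one_of_adj (hG : G.Connected) {u v : V} (h : G.Adj u v) :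
    ecc G u ≤ ecc G v + 1 := by
  simpa [dist_eq_one_iff_adj.2 h, add_comm] using ecc_le_dist_add_ecc hG u v

end Eccentricity

namespace SimpleGraph.Iso

variable {W : Type*} {G : SimpleGraph V} {H : SimpleGraph W}

lemma dist_apply_le (φ : G ≃g H) (u v : V) : H.dist (φ u) (φ v) ≤ G.dist u v := by
  by_cases huv : G.Reachable u v
  · obtain ⟨p, hp⟩ := huv.exists_walk_length_eq_dist
    simpa [hp] using SimpleGraph.dist_le (p.map φ.toHom)
  · have : ¬ H.Reachable (φ u) (φ v) := fun h => huv (by simpa using h.map φ.symm.toHom)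
    simp [dist_eq_zero_of_not_reachable this]

lemma dist_apply (φ : G ≃g H) (u v : V) : H.dist (φ u) (φ v) = G.dist u v :=
  le_antisymm (dist_apply_le φ u v) (by simpa using dist_apply_le φ.symm (φ u) (φ v))

lemma ecc_apply (φ : G ≃g H) (v : V) : ecc H (φ v) = ecc G v := by
  simp only [ecc, ← dist_apply φ v]
  exact (φ.toEquiv.surjective.iSup_comp (H.dist (φ v))).symm

lemma ree_eq [Fintype V] [Fintype W] (φ : G ≃g H) : ree H = ree G := by
  classical
  unfold ree
  symm
  apply Finset.sum_nbij' (Sym2.map φ) (Sym2.map φ.symm)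
  all_goals intro e he
  all_goals induction e
  all_goals simp_all [ecc_apply, map_adj_iff]

end SimpleGraph.Iso

namespace SimpleGraph

variable {G : SimpleGraph V}

lemma Connected.exists_adj_dist_add_one (hG : G.Connected) {c v : V} (hv : v ≠ c) :
    ∃ w, G.Adj v w ∧ G.dist c w + 1 = G.dist c v := by
  obtain ⟨p, hp⟩ := hG.exists_walk_length_eq_dist v c
  have hnil : ¬ p.Nil := p.not_nil_of_ne hv
  refine ⟨p.snd, p.adj_snd hnil, ?_⟩
  have h1 : G.dist p.snd c ≤ p.tail.length := dist_le p.tail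
  have h2 := p.length_tail_add_one hnil
  have h3 : G.dist v c ≤ G.dist v p.snd + G.dist p.snd c := hG.dist_triangle
  rw [dist_eq_one_iff_adj.2 (p.adj_snd hnil)] at h3
  rw [dist_comm, dist_comm (u := c)]
  omega

/-- The height `h`, decreasing along `par`, only serves to make `v ↦ s(v, par v)` injective. -/
def IsParentMap (G : SimpleGraph V) (c : V) (par : V → V) (h : V → ℕ) : Prop :=
  ∀ v ≠ c, G.Adj v (par v) ∧ h (par v) < h v

lemma Connected.exists_isParentMap (hG : G.Connected) (c : V) :
    ∃ par, IsParentMap G c par (G.dist c) := by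
  choose! par hpar using fun v (hv : v ≠ c) => hG.exists_adj_dist_add_one hv
  exact ⟨par, fun v hv => ⟨(hpar v hv).1, by have := (hpar v hv).2; omega⟩⟩

variable {c : V} {par : V → V} {h : V → ℕ}

lemma IsParentMap.injOn_edge (hp : IsParentMap G c par h) :
    Set.InjOn (fun v => s(v, par v)) {c}ᶜ := by
  intro x hx y hy hxy
  rcases Sym2.eq_iff.1 hxy with ⟨hxy, -⟩ | ⟨hx', hy'⟩
  · exact hxy
  · have h1 := (hp x hx).2
    have h2 := (hp y hy).2
    rw [hy'] at h1
    rw [← hx'] at h2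
    omega

lemma nonempty_iso_of_parent {W : Type*} {H : SimpleGraph W} {d : W} {qar : W → W}
    (hG : ∀ {x y}, G.Adj x y ↔ (x ≠ c ∧ y = par x) ∨ (y ≠ c ∧ x = par y))
    (hH : ∀ {x y}, H.Adj x y ↔ (x ≠ d ∧ y = qar x) ∨ (y ≠ d ∧ x = qar y))
    (e : V ≃ W) (hc : e c = d) (he : ∀ v ≠ c, e (par v) = qar (e v)) : Nonempty (G ≃g H) := by
  have hne (v : V) : e v ≠ d ↔ v ≠ c := by rw [← hc, e.injective.ne_iff]
  have hpar (v w : V) (hv : v ≠ c) : e w = qar (e v) ↔ w = par v := by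
    rw [← he v hv, e.apply_eq_iff_eq]
  refine ⟨⟨e, fun {x y} => ?_⟩⟩
  rw [hH, hG, hne, hne]
  exact or_congr (and_congr_right (hpar x y)) (and_congr_right (hpar y x))

lemma Connected.dist_eq_dist_add_one_of_adj_iff (hG : G.Connected)
    {p q x : V} (hq : ∀ w, G.Adj q w ↔ w = p) (hx : x ≠ q) : G.dist x q = G.dist x p + 1 := by
  obtain ⟨w, hqw, hw⟩ := hG.exists_adj_dist_add_one hx.symm
  rw [← (hq w).1 hqw, hw]

variable [Fintype V] [DecidableEq V]

lemma IsTree.edgeFinset_eq_image [Fintype G.edgeSet] (hT : G.IsTree)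
    (hp : IsParentMap G c par h) :
    G.edgeFinset = (univ.erase c).image fun v => s(v, par v) := by
  have hinj : Set.InjOn (fun v => s(v, par v)) ↑(univ.erase c) :=
    hp.injOn_edge.mono fun v => by simp
  symm
  apply Finset.eq_of_subset_of_card_le
  · intro e he
    obtain ⟨v, hv, rfl⟩ := mem_image.1 he
    simpa using (hp v (ne_of_mem_erase hv)).1
  · rw [card_image_of_injOn hinj, card_erase_of_mem (mem_univ c), card_univ,
      ← hT.card_edgeFinset]
    simp

lemma IsTree.adj_iff_of_isParentMap (hT : G.IsTree) (hp : IsParentMap G c par h) {x y : V} :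
    G.Adj x y ↔ (x ≠ c ∧ y = par x) ∨ (y ≠ c ∧ x = par y) := by
  classical
  rw [← mem_edgeSet, ← mem_edgeFinset, hT.edgeFinset_eq_image hp]
  simp only [mem_image, mem_erase, mem_univ, and_true, Sym2.eq_iff]
  constructor
  · rintro ⟨v, hv, ⟨rfl, rfl⟩ | ⟨rfl, rfl⟩⟩
    · exact Or.inl ⟨hv, rfl⟩
    · exact Or.inr ⟨hv, rfl⟩
  · rintro (⟨hx, rfl⟩ | ⟨hy, rfl⟩)
    · exact ⟨x, hx, Or.inl ⟨rfl, rfl⟩⟩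
    · exact ⟨y, hy, Or.inr ⟨rfl, rfl⟩⟩

lemma IsTree.ree_eq_sum (hT : G.IsTree) (hp : IsParentMap G c par h) :
    ree G = ∑ v ∈ univ.erase c, (1 / (ecc G v : ℝ) + 1 / (ecc G (par v) : ℝ)) := by
  classical
  unfold ree
  rw [hT.edgeFinset_eq_image hp, sum_image]
  · rfl
  · exact hp.injOn_edge.mono fun v => by simp

end SimpleGraph

section Domination

variable {G : SimpleGraph V}

def IsDominating (G : SimpleGraph V) (D : Set V) : Prop :=
  ∀ x, x ∈ D ∨ ∃ y ∈ D, G.Adj x y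

lemma domNum_le_ncard {D : Set V} (hD : IsDominating G D) : domNum G ≤ D.ncard :=
  Nat.sInf_le ⟨D, hD, rfl⟩

lemma domNum_le_card (D : Finset V) (hD : IsDominating G D) : domNum G ≤ D.card := by
  simpa using domNum_le_ncard hD

lemma domNum_le_card_univ [Fintype V] : domNum G ≤ Fintype.card V :=
  domNum_le_card univ fun x => Or.inl (by simp)

lemma exists_isDominating_ncard_eq [Finite V] : ∃ D, IsDominating G D ∧ D.ncard = domNum G :=
  Nat.sInf_mem (s := {m | ∃ D, IsDominating G D ∧ D.ncard = m})
    ⟨_, Set.univ, fun _ => Or.inl trivial, rfl⟩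

lemma IsDominating.of_forall_exists {D : Set V}
    (h : ∀ x, ∃ y ∈ D, y = x ∨ G.Adj y x) : IsDominating G D := by
  intro x
  obtain ⟨y, hy, rfl | hxy⟩ := h x
  · exact Or.inl hy
  · exact Or.inr ⟨y, hy, hxy.symm⟩

/-- Ore's bound. -/
theorem two_mul_domNum_le_card [Fintype V] (hG : ∀ v, ∃ w, G.Adj v w) :
    2 * domNum G ≤ Fintype.card V := by
  obtain ⟨D, hD, hcard⟩ := exists_isDominating_ncard_eq (G := G)
  -- by minimality, `D \ {v}` does not dominate
  have hout : ∀ v ∈ D, ∃ w ∉ D, G.Adj v w := by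
    intro v hv
    by_contra! hin
    have hdom : IsDominating G (D \ {v}) := by
      intro x
      by_cases hxv : x = v
      · obtain ⟨w, hw⟩ := hG v
        subst hxv
        exact Or.inr ⟨w, ⟨by_contra fun h => hin w h hw, (G.ne_of_adj hw).symm⟩, hw⟩
      · rcases hD x with hx | ⟨y, hy, hxy⟩
        · exact Or.inl ⟨hx, hxv⟩
        · by_cases hyv : y = v
          · subst hyv
            exact Or.inl ⟨by_contra fun h => hin x h hxy.symm, hxv⟩
          · exact Or.inr ⟨y, ⟨hy, hyv⟩, hxy⟩
    have h1 := domNum_le_ncard hdom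
    have h2 : 0 < D.ncard := (Set.ncard_pos D.toFinite).2 ⟨v, hv⟩
    rw [Set.ncard_sdiff_singleton_of_mem hv] at h1
    omega
  have hcompl : IsDominating G Dᶜ := fun x => by
    by_cases hx : x ∈ D
    · obtain ⟨w, hw, hxw⟩ := hout x hx
      exact Or.inr ⟨w, hw, hxw⟩
    · exact Or.inl hx
  have h1 := domNum_le_ncard hcompl
  have h2 := Set.ncard_add_ncard_compl D
  rw [Nat.card_eq_fintype_card] at h2
  omega

end Domination

namespace SimpleGraph

variable {G : SimpleGraph V}

lemma Walk.getVert_eq_or_adj_getVert {u v : V} (p : G.Walk u v) {i j : ℕ} (hij : i ≤ j + 1)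
    (hji : j ≤ i + 1) : p.getVert i = p.getVert j ∨ G.Adj (p.getVert i) (p.getVert j) := by
  rcases (by omega : i = j ∨ j = i + 1 ∨ i = j + 1) with rfl | rfl | rfl
  · exact Or.inl rfl
  · by_cases hi : i < p.length
    · exact Or.inr (p.adj_getVert_succ hi)
    · rw [p.getVert_of_length_le (by omega), p.getVert_of_length_le (by omega)]
      exact Or.inl rfl
  · by_cases hj : j < p.length
    · exact Or.inr (p.adj_getVert_succ hj).symm
    · rw [p.getVert_of_length_le (by omega), p.getVert_of_length_le (by omega)]
      exact Or.inl rfl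

lemma IsTree.eq_of_adj_of_dist_add_one (hT : G.IsTree) {w u v x : V} (hu : G.Adj w u)
    (hv : G.Adj w v) (hux : G.dist u x + 1 = G.dist w x) (hvx : G.dist v x + 1 = G.dist w x) :
    u = v := by
  obtain ⟨p, -, hp⟩ := hT.connected.exists_path_of_dist u x
  obtain ⟨q, -, hq⟩ := hT.connected.exists_path_of_dist v x
  have hp' := (p.cons hu).isPath_of_length_eq_dist (by simp [hp, hux])
  have hq' := (q.cons hv).isPath_of_length_eq_dist (by simp [hq, hvx])
  simpa using congrArg Walk.snd ((hT.existsUnique_path w x).unique hp' hq')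

lemma IsTree.exists_median (hT : G.IsTree) (a b v : V) :
    ∃ m, G.dist a m + G.dist m b = G.dist a b ∧ G.dist a v = G.dist a m + G.dist m v ∧
      G.dist v b = G.dist m v + G.dist m b := by
  have hG := hT.connected
  induction hk : G.dist a v generalizing v with
  | zero =>
    obtain rfl : a = v := hG.dist_eq_zero_iff.1 hk
    exact ⟨a, by simp⟩
  | succ k ih =>
    have hva : v ≠ a := by rintro rfl; simp at hk
    obtain ⟨w, hvw, hw⟩ := hG.exists_adj_dist_add_one hva
    obtain ⟨m, hm, hmw, hwb⟩ := ih w (by omega)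
    have t1 : G.dist a v ≤ G.dist a m + G.dist m v := hG.dist_triangle
    have t2 : G.dist m v ≤ G.dist m w + G.dist w v := hG.dist_triangle
    have t3 : G.dist v b ≤ G.dist v m + G.dist m b := hG.dist_triangle
    have hwv : G.dist w v = 1 := dist_eq_one_iff_adj.2 hvw.symm
    have c1 : G.dist v m = G.dist m v := dist_comm
    have c2 : G.dist b v = G.dist v b := dist_comm
    have c3 : G.dist b w = G.dist w b := dist_comm
    rcases hT.dist_eq_dist_add_one_of_adj b hvw with hb | hb
    · exact ⟨m, hm, by omega, by omega⟩
    -- otherwise `w = m`, as a step from `w` towards `m` would also lead towards `b`, so would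
    -- be `v`, which leads away from `a`
    obtain rfl : w = m := by
      by_contra hwm
      obtain ⟨u, hwu, hu⟩ := hG.exists_adj_dist_add_one hwm
      have t4 : G.dist u b ≤ G.dist u m + G.dist m b := hG.dist_triangle
      have t5 : G.dist w b ≤ G.dist w u + G.dist u b := hG.dist_triangle
      have t6 : G.dist a u ≤ G.dist a m + G.dist m u := hG.dist_triangle
      have hwu' : G.dist w u = 1 := dist_eq_one_iff_adj.2 hwu
      have c4 : G.dist u m = G.dist m u := dist_comm
      obtain rfl : u = v :=
        hT.eq_of_adj_of_dist_add_one hwu hvw.symm (x := b) (by omega) (by omega)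
      omega
    exact ⟨v, by omega, by simp [hk], by simp⟩

lemma IsTree.getVert_dist_eq (hT : G.IsTree) {a b m : V} {W : G.Walk a b}
    (hW : W.length = G.dist a b) (hm : G.dist a m + G.dist m b = G.dist a b) :
    W.getVert (G.dist a m) = m := by
  obtain ⟨p, -, hp⟩ := hT.connected.exists_path_of_dist a m
  obtain ⟨q, -, hq⟩ := hT.connected.exists_path_of_dist m b
  have hpq := (p.append q).isPath_of_length_eq_dist (by simp [hp, hq, hm])
  rw [← (hT.existsUnique_path a b).unique hpq (W.isPath_of_length_eq_dist hW), ← hp,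
    Walk.getVert_append]
  simp

lemma IsTree.exists_getVert_eq_or_adj (hT : G.IsTree) {a b v : V} {W : G.Walk a b}
    (hW : W.length = G.dist a b) {s t : ℕ} (hst : s + t ≤ G.dist a b + 3)
    (hs : G.dist a v ≤ s) (ht : G.dist v b ≤ t) :
    ∃ i, G.dist a b ≤ t + i ∧ i ≤ s ∧
      (v = W.getVert i ∨ G.dist a b < t + i ∧ i < s ∧ G.Adj (W.getVert i) v) := by
  obtain ⟨m, hm, hav, hvb⟩ := hT.exists_median a b v
  refine ⟨G.dist a m, by omega, by omega, ?_⟩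
  rw [hT.getVert_dist_eq hW hm]
  rcases (by omega : G.dist m v = 0 ∨ G.dist m v = 1) with h0 | h1
  · exact Or.inl (hT.connected.dist_eq_zero_iff.1 h0).symm
  · exact Or.inr ⟨by omega, by omega, dist_eq_one_iff_adj.1 h1⟩

lemma IsTree.domNum_le_two (hT : G.IsTree) {a b : V} (hab : ∀ x y, G.dist x y ≤ G.dist a b)
    (hD : G.dist a b ≤ 3) : domNum G ≤ 2 := by
  classical
  obtain ⟨W, -, hW⟩ := hT.connected.exists_path_of_dist a b
  refine (domNum_le_card {W.getVert 1, W.getVert 2}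
    (IsDominating.of_forall_exists fun x => ?_)).trans card_le_two
  obtain ⟨i, -, hi, hx⟩ := hT.exists_getVert_eq_or_adj hW (by omega) (hab a x) (hab x b)
  rcases hx with rfl | ⟨h1, h2, hadj⟩
  · rcases le_or_gt i 1 with hi1 | hi1
    · exact ⟨W.getVert 1, by simp, W.getVert_eq_or_adj_getVert (by omega) (by omega)⟩
    · exact ⟨W.getVert 2, by simp, W.getVert_eq_or_adj_getVert (by omega) (by omega)⟩
  · exact ⟨W.getVert i, by rcases (by omega : i = 1 ∨ i = 2) with rfl | rfl <;> simp, Or.inr hadj⟩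

/-- A root for the extremal argument: the centre of `G` if its diameter is even, one of the two
central vertices if it is odd. -/
lemma IsTree.exists_root [Fintype V] (hT : G.IsTree) (hg : 3 ≤ domNum G) :
    ∃ c, (∀ v, 2 ≤ ecc G v) ∧ (∀ v, ecc G v ≤ 2 → v = c) ∧
      ∀ v, ecc G v ≤ 3 → c = v ∨ G.Adj c v := by
  have := hT.connected.nonempty
  obtain ⟨⟨a, b⟩, hab⟩ := Finite.exists_max fun p : V × V => G.dist p.1 p.2
  obtain ⟨W, -, hW⟩ := hT.connected.exists_path_of_dist a b
  have hD : 4 ≤ G.dist a b := by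
    by_contra! h
    have := hT.domNum_le_two (a := a) (b := b) (fun x y => hab (x, y)) (by omega)
    omega
  have hecc (v : V) : G.dist a v ≤ ecc G v ∧ G.dist v b ≤ ecc G v :=
    ⟨dist_comm (G := G) ▸ dist_le_ecc v a, dist_le_ecc v b⟩
  refine ⟨W.getVert (G.dist a b / 2), fun v => ?_, fun v hv => ?_, fun v hv => ?_⟩
  · have := hT.connected.dist_triangle (u := a) (v := v) (w := b)
    have := hecc v
    omega
  · obtain ⟨i, h1, h2, rfl | ⟨-, h3, -⟩⟩ := hT.exists_getVert_eq_or_adj hW (s := 2) (t := 2)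
      (by omega) ((hecc v).1.trans hv) ((hecc v).2.trans hv)
    · congr 1
      omega
    · omega
  · obtain ⟨i, h1, h2, rfl | ⟨h3, h4, hadj⟩⟩ := hT.exists_getVert_eq_or_adj hW (s := 3) (t := 3)
      (by omega) ((hecc v).1.trans hv) ((hecc v).2.trans hv)
    · exact W.getVert_eq_or_adj_getVert (by omega) (by omega)
    · obtain rfl : i = G.dist a b / 2 := by omega
      exact Or.inr hadj

end SimpleGraph

lemma one_div_add_one_div_le {p q x y : ℕ} (hp : 0 < p) (hq : 0 < q) (hx : p ≤ x) (hy : q ≤ y) :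
    (1 / x + 1 / y : ℝ) ≤ 1 / p + 1 / q := by
  gcongr

lemma eq_of_one_div_add_one_div_eq {p q x y : ℕ} (hp : 0 < p) (hq : 0 < q) (hx : p ≤ x)
    (hy : q ≤ y) (h : (1 / x + 1 / y : ℝ) = 1 / p + 1 / q) : x = p ∧ y = q := by
  have h1 : (1 / x : ℝ) ≤ 1 / p := by gcongr
  have h2 : (1 / y : ℝ) ≤ 1 / q := by gcongr
  have e1 : (1 / x : ℝ) = 1 / p := by linarith
  have e2 : (1 / y : ℝ) = 1 / q := by linarith
  simp only [one_div, inv_inj, Nat.cast_inj] at e1 e2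
  exact ⟨e1, e2⟩

/-- The largest possible value of `1 / ecc v + 1 / ecc w` on an edge `vw` with `ecc v = e ≥ 3`
and `ecc w ≥ max 2 (e - 1)`. -/
noncomputable def edgeBound (e : ℕ) : ℝ := if 4 ≤ e then 1 / 4 + 1 / 3 else 1 / 3 + 1 / 2

lemma one_div_add_one_div_le_edgeBound {x y : ℕ} (hx : 3 ≤ x) (hy : 2 ≤ y) (hxy : x ≤ y + 1) :
    (1 / x + 1 / y : ℝ) ≤ edgeBound x := by
  unfold edgeBound
  split_ifs with h
  · exact_mod_cast one_div_add_one_div_le (p := 4) (q := 3) (by norm_num) (by norm_num) h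
      (by omega)
  · exact_mod_cast one_div_add_one_div_le (p := 3) (q := 2) (by norm_num) (by norm_num) hx hy

lemma eq_of_one_div_add_one_div_eq_edgeBound {x y : ℕ} (hx : 3 ≤ x) (hy : 2 ≤ y)
    (hxy : x ≤ y + 1) (h : (1 / x + 1 / y : ℝ) = edgeBound x) :
    (4 ≤ x → x = 4 ∧ y = 3) ∧ (x < 4 → y = 2) := by
  unfold edgeBound at h
  refine ⟨fun h4 => ?_, fun h4 => ?_⟩
  · rw [if_pos h4] at h
    exact eq_of_one_div_add_one_div_eq (by norm_num) (by norm_num) h4 (by omega)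
      (by exact_mod_cast h)
  · rw [if_neg (by omega)] at h
    exact (eq_of_one_div_add_one_div_eq (p := 3) (by norm_num) (by norm_num) hx hy
      (by exact_mod_cast h)).2

lemma sum_edgeBound (s : Finset V) (f : V → ℕ) :
    ∑ v ∈ s, edgeBound (f v) = 5 / 6 * #s - 1 / 4 * #{v ∈ s | 4 ≤ f v} := by
  simp only [edgeBound]
  rw [sum_ite, sum_const, sum_const, nsmul_eq_mul, nsmul_eq_mul,
    ← card_filter_add_card_filter_not (s := s) (fun v => 4 ≤ f v)]
  push_cast
  ring


/-- Truncated subtraction sends the star leaves `1, …, n - g` of `Tnb n g` to the centre `0`. -/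
def tnbParent (n g : ℕ) (i : Fin n) : Fin n := ⟨i - (n - g), by omega⟩

section Tnb

variable {n g : ℕ}

lemma tnb_adj_iff [NeZero n] (hn : 2 * g ≤ n) {x y : Fin n} :
    (Tnb n g).Adj x y ↔ (x ≠ 0 ∧ y = tnbParent n g x) ∨ (y ≠ 0 ∧ x = tnbParent n g y) := by
  simp only [Tnb, fromRel_adj, ne_eq, Fin.ext_iff, tnbParent, Fin.val_zero]
  omega

lemma isParentMap_tnbParent [NeZero n] (hn : 2 * g ≤ n) :
    IsParentMap (Tnb n g) 0 (tnbParent n g) Fin.val := fun v hv => by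
  refine ⟨(tnb_adj_iff hn).2 (Or.inl ⟨hv, rfl⟩), ?_⟩
  have := Fin.val_ne_zero_iff.2 hv
  simp only [tnbParent]
  omega

lemma dist_tnb_zero_le [NeZero n] (hn : 2 * g ≤ n) (v : Fin n) : (Tnb n g).dist 0 v ≤ 2 := by
  have hadj {x : Fin n} (hx : x ≠ 0) : (Tnb n g).Adj x (tnbParent n g x) :=
    (isParentMap_tnbParent hn x hx).1
  have hpp : tnbParent n g (tnbParent n g v) = 0 := Fin.ext (by simp [tnbParent]; omega)
  by_cases hv : v = 0
  · simp [hv]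
  by_cases hp : tnbParent n g v = 0
  · have := hadj hv
    rw [hp] at this
    simp [dist_eq_one_iff_adj.2 this.symm]
  · have h1 := hadj hp
    rw [hpp] at h1
    simpa using dist_le (.cons h1.symm (.cons (hadj hv).symm .nil))

lemma dist_tnb_eq_of_lt [NeZero n] (hn : 2 * g ≤ n) (hT : (Tnb n g).Connected) {q x : Fin n}
    (hq : n - g < q.val) (hx : x ≠ q) :
    (Tnb n g).dist x q = (Tnb n g).dist x (tnbParent n g q) + 1 := by
  refine hT.dist_eq_dist_add_one_of_adj_iff (fun w => ?_) hx
  simp only [tnb_adj_iff hn, Fin.ext_iff, tnbParent, ne_eq, Fin.val_zero]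
  omega

lemma two_le_dist_tnb [NeZero n] (hn : 2 * g ≤ n) (hT : (Tnb n g).Connected) {x y : Fin n}
    (hx0 : x ≠ 0) (hy0 : y ≠ 0) (hx : x.val ≤ n - g) (hy : y.val ≤ n - g) (hxy : x ≠ y) :
    2 ≤ (Tnb n g).dist x y := by
  refine hT.one_lt_dist_of_ne_of_not_adj hxy ?_
  rw [tnb_adj_iff hn, ← Fin.val_ne_zero_iff, ← Fin.val_ne_zero_iff]
  simp only [Fin.ext_iff, ne_eq, tnbParent, Fin.val_zero] at hxy hx0 hy0 ⊢
  omega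

lemma tnbParent_ne_zero_of_lt [NeZero n] (hn : 2 * g ≤ n) {q : Fin n} (hq : n - g < q.val) :
    tnbParent n g q ≠ 0 ∧ (tnbParent n g q).val ≤ n - g := by
  have := q.isLt
  rw [← Fin.val_ne_zero_iff]
  simp only [tnbParent]
  omega

lemma exists_tnbParent_ne (hn : 2 * g ≤ n) (hg : 3 ≤ g) (x : Fin n) :
    ∃ q : Fin n, n - g < q.val ∧ tnbParent n g q ≠ x := by
  by_cases hx : x.val = 1
  · exact ⟨⟨n - g + 2, by omega⟩, by simp, by simp [Fin.ext_iff, tnbParent]; omega⟩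
  · exact ⟨⟨n - g + 1, by omega⟩, by simp, by simp [Fin.ext_iff, tnbParent]; omega⟩

lemma ecc_tnb [NeZero n] (hn : 2 * g ≤ n) (hg : 3 ≤ g) (hT : (Tnb n g).Connected) (v : Fin n) :
    ecc (Tnb n g) v = if v = 0 then 2 else if v.val ≤ n - g then 3 else 4 := by
  have hup (x : Fin n) : ecc (Tnb n g) x ≤ (Tnb n g).dist x 0 + 2 :=
    (ecc_le_dist_add_ecc hT x 0).trans (by have := ecc_le (dist_tnb_zero_le hn); omega)
  have hpar (x : Fin n) : (tnbParent n g x).val = x.val - (n - g) := rfl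
  split_ifs with h0 hleaf
  · subst h0
    obtain ⟨q, hq, -⟩ := exists_tnbParent_ne hn hg 0
    refine le_antisymm (ecc_le (dist_tnb_zero_le hn)) ((?_ : 2 ≤ _).trans (dist_le_ecc 0 q))
    rw [dist_tnb_eq_of_lt hn hT hq (by rw [ne_comm, ← Fin.val_ne_zero_iff]; omega)]
    have := hT.pos_dist_of_ne (tnbParent_ne_zero_of_lt hn hq).1.symm
    omega
  · obtain ⟨q, hq, hqv⟩ := exists_tnbParent_ne hn hg v
    have hadj : (Tnb n g).Adj v 0 :=
      (tnb_adj_iff hn).2 (Or.inl ⟨h0, Fin.ext (by simp [hpar]; omega)⟩)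
    refine le_antisymm ((hup v).trans ?_) ((?_ : 3 ≤ _).trans (dist_le_ecc v q))
    · rw [dist_eq_one_iff_adj.2 hadj]
    · rw [dist_tnb_eq_of_lt hn hT hq (by simp [Fin.ext_iff]; omega)]
      have := two_le_dist_tnb hn hT h0 (tnbParent_ne_zero_of_lt hn hq).1 hleaf
        (tnbParent_ne_zero_of_lt hn hq).2 hqv.symm
      omega
  · obtain ⟨q, hq, hqv⟩ := exists_tnbParent_ne hn hg (tnbParent n g v)
    have hv : n - g < v.val := by omega
    obtain ⟨hq0, hql⟩ := tnbParent_ne_zero_of_lt hn hq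
    obtain ⟨hv0, hvl⟩ := tnbParent_ne_zero_of_lt hn hv
    refine le_antisymm ((hup v).trans ?_) ((?_ : 4 ≤ _).trans (dist_le_ecc v q))
    · have := dist_tnb_zero_le hn v
      rw [dist_comm]
      omega
    · have hpv : tnbParent n g q ≠ v := by
        rw [Ne, Fin.ext_iff]
        omega
      rw [dist_tnb_eq_of_lt hn hT hq (by rintro rfl; exact hqv rfl), dist_comm,
        dist_tnb_eq_of_lt hn hT hv hpv]
      have := two_le_dist_tnb hn hT hq0 hv0 hql hvl hqv
      omega

lemma ree_tnb [NeZero n] (hn : 2 * g ≤ n) (hg : 3 ≤ g) (hT : (Tnb n g).IsTree) :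
    ree (Tnb n g) = (10 * n - 3 * g - 7) / 12 := by
  classical
  have hecc := ecc_tnb hn hg hT.connected
  have hterm : ∀ v ∈ univ.erase (0 : Fin n), (1 / (ecc (Tnb n g) v : ℝ) +
      1 / (ecc (Tnb n g) (tnbParent n g v) : ℝ)) = edgeBound (ecc (Tnb n g) v) := by
    intro v hv
    have hv0 := ne_of_mem_erase hv
    rw [hecc v, hecc (tnbParent n g v)]
    rcases le_or_gt v.val (n - g) with h | h
    · have hp : tnbParent n g v = 0 :=
        Fin.ext (by rw [Fin.val_zero]; exact Nat.sub_eq_zero_of_le h)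
      simp [hv0, h, hp, edgeBound]
    · have hp0 : tnbParent n g v ≠ 0 := by
        rw [Ne, Fin.ext_iff, Fin.val_zero]
        exact Nat.sub_ne_zero_of_lt h
      have hpl : (tnbParent n g v).val ≤ n - g := by simp only [tnbParent]; omega
      simp [hv0, h.not_ge, hp0, hpl, edgeBound]
  have hpend : #{v ∈ univ.erase (0 : Fin n) | 4 ≤ ecc (Tnb n g) v} = g - 1 := by
    have h := card_filter_add_card_filter_not (s := univ) (fun v : Fin n => v.val < n - g + 1)
    rw [Fin.card_filter_val_lt, card_univ, Fintype.card_fin] at h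
    have hset : {v ∈ univ.erase (0 : Fin n) | 4 ≤ ecc (Tnb n g) v} =
        univ.filter fun v : Fin n => ¬ v.val < n - g + 1 := by
      ext v
      rcases eq_or_ne v 0 with rfl | h0
      · simp
      · have := Fin.val_ne_zero_iff.2 h0
        simp only [mem_filter, mem_erase, mem_univ, ne_eq, h0, not_false_eq_true, and_true,
          true_and]
        rw [hecc, if_neg h0]
        split_ifs <;> omega
    rw [hset]
    omega
  rw [hT.ree_eq_sum (isParentMap_tnbParent hn), sum_congr rfl hterm, sum_edgeBound, hpend,
    card_erase_of_mem (mem_univ _), card_univ, Fintype.card_fin,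
    Nat.cast_sub (by omega : 1 ≤ g), Nat.cast_sub (by omega : 1 ≤ n)]
  ring

/-- The vertex of `T` matched with the vertex `i` of `Tnb n g`, where `b` enumerates the vertices
of depth two of `T` rooted at `c`. The star leaves `g, …, n - g` of `Tnb n g`, which carry no
pendant vertex, are left to be matched arbitrarily. -/
def spiderLabel {α : Type*} (n g : ℕ) (c : α) (par : α → α) (b : ℕ → α) (i : Fin n) : α :=
  if i.val = 0 then c else if i.val < g then par (b (i.val - 1)) else b (i.val - (n - g) - 1)

lemma injOn_spiderLabel {α : Type*} {c : α} {par : α → α} {b : ℕ → α} {B : Finset α}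
    (hn : 2 * g ≤ n) (hb : Set.BijOn b (range (g - 1)) B) (hcB : c ∉ B)
    (hinj : Set.InjOn par B) (hparB : ∀ v ∈ B, par v ≠ c ∧ par v ∉ B) :
    Set.InjOn (spiderLabel n g c par b) {i | i.val < g ∨ n - g < i.val} := by
  have hbB {j : ℕ} (hj : j < g - 1) : b j ∈ B := hb.mapsTo (by simpa using hj)
  have hbinj {j k : ℕ} (hj : j < g - 1) (hk : k < g - 1) (h : b j = b k) : j = k :=
    hb.injOn (by simpa using hj) (by simpa using hk) h
  intro i hi j hj hij
  simp only [Set.mem_ofPred_eq] at hi hj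
  have := i.isLt
  have := j.isLt
  simp only [spiderLabel] at hij
  -- the three branches are injective, with values in the disjoint sets `{c}`, `par '' B`, `B`
  split_ifs at hij <;> apply Fin.ext
  · omega
  · exact absurd hij.symm (hparB _ (hbB (by omega))).1
  · exact absurd (hij ▸ hbB (by omega)) hcB
  · exact absurd hij (hparB _ (hbB (by omega))).1
  · have := hbinj (by omega) (by omega) (hinj (hbB (by omega)) (hbB (by omega)) hij)
    omega
  · exact absurd (hij ▸ hbB (by omega)) (hparB _ (hbB (by omega))).2
  · exact absurd (hij ▸ hbB (by omega)) hcB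
  · exact absurd (hij ▸ hbB (by omega)) (hparB _ (hbB (by omega))).2
  · have := hbinj (by omega) (by omega) hij
    omega

lemma exists_equiv_tnbParent [NeZero n] {c : Fin n} {par : Fin n → Fin n} {B : Finset (Fin n)}
    (hB : #B + 1 = g) (hn : 2 * g ≤ n) (hcB : c ∉ B) (hinj : Set.InjOn par B)
    (hparB : ∀ v ∈ B, par v ≠ c ∧ par v ∉ B) (hparA : ∀ v ≠ c, v ∉ B → par v = c) :
    ∃ σ : Fin n ≃ Fin n, σ 0 = c ∧ ∀ i ≠ 0, σ (tnbParent n g i) = par (σ i) := by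
  obtain ⟨b, hb⟩ : ∃ b : ℕ → Fin n, Set.BijOn b (range (g - 1)) B :=
    (range (g - 1)).finite_toSet.exists_bijOn_of_encard_eq
      (by simp only [Set.encard_coe_eq_coe_finsetCard, card_range]; norm_cast; omega)
  set f := spiderLabel n g c par b
  obtain ⟨e, he⟩ := Set.MapsTo.exists_equiv_extend_of_card_eq (t := univ) (by simp)
    (fun _ _ => mem_coe.2 (mem_univ _)) (injOn_spiderLabel hn hb hcB hinj hparB)
  let σ : Fin n ≃ Fin n := e.trans (Equiv.subtypeUnivEquiv mem_univ)
  have hσ {i : Fin n} (hi : i.val < g ∨ n - g < i.val) : σ i = f i := he i hi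
  have hσ0 : σ 0 = c := by
    rw [hσ (by simp; omega)]
    simp [f, spiderLabel]
  refine ⟨σ, hσ0, fun i hi => ?_⟩
  have hi0 : i.val ≠ 0 := Fin.val_ne_zero_iff.2 hi
  have hpar : (tnbParent n g i).val = i.val - (n - g) := rfl
  by_cases hhigh : n - g < i.val
  · have hp0 : (tnbParent n g i).val ≠ 0 := by omega
    have hpg : (tnbParent n g i).val < g := by omega
    rw [hσ (Or.inl hpg), hσ (Or.inr hhigh)]
    simp only [f, spiderLabel]
    rw [if_neg hp0, if_pos hpg, if_neg hi0, if_neg (by omega : ¬ i.val < g), hpar]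
  have hp : tnbParent n g i = 0 :=
    Fin.ext (by rw [Fin.val_zero]; exact Nat.sub_eq_zero_of_le (by omega))
  rw [hp, hσ0]
  by_cases hmid : i.val < g
  · rw [hσ (Or.inl hmid)]
    simp only [f, spiderLabel, if_neg hi0, if_pos hmid]
    have := hparB _ (hb.mapsTo (x := i.val - 1) (by simp; omega))
    exact (hparA _ this.1 this.2).symm
  have hiB : σ i ∉ B := by
    intro hmem
    obtain ⟨j, hj, hbj⟩ := hb.surjOn hmem
    simp only [coe_range, Set.mem_Iio] at hj
    -- `σ` already sends the pendant vertex `j + (n - g) + 1` to `b j`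
    have hk := hσ (i := ⟨j + (n - g) + 1, by omega⟩) (Or.inr (by simp))
    simp only [f, spiderLabel, if_neg (by omega : ¬ j + (n - g) + 1 = 0),
      if_neg (by omega : ¬ j + (n - g) + 1 < g),
      (by omega : j + (n - g) + 1 - (n - g) - 1 = j)] at hk
    have := congrArg Fin.val (σ.injective (hk.trans hbj))
    simp only at this
    omega
  exact (hparA _ (hσ0 ▸ σ.injective.ne hi) hiB).symm

lemma nonempty_iso_Tnb {T : SimpleGraph (Fin n)} {c : Fin n} {par : Fin n → Fin n}
    (hadj : ∀ {x y}, T.Adj x y ↔ (x ≠ c ∧ y = par x) ∨ (y ≠ c ∧ x = par y))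
    {B : Finset (Fin n)} (hB : #B + 1 = g) (hn : 2 * g ≤ n) (hcB : c ∉ B)
    (hinj : Set.InjOn par B) (hparB : ∀ v ∈ B, par v ≠ c ∧ par v ∉ B)
    (hparA : ∀ v ≠ c, v ∉ B → par v = c) : Nonempty (T ≃g Tnb n g) := by
  have : NeZero n := ⟨by omega⟩
  obtain ⟨σ, hσ0, hσ⟩ := exists_equiv_tnbParent hB hn hcB hinj hparB hparA
  exact ⟨(nonempty_iso_of_parent (tnb_adj_iff hn) hadj σ hσ0 hσ).some.symm⟩

end Tnb

namespace SimpleGraph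

variable {G : SimpleGraph V} {c : V}

lemma domNum_le_card_filter_add_one [Fintype V] [DecidableEq V]
    (hdom : ∀ v, ecc G v ≤ 3 → c = v ∨ G.Adj c v) :
    domNum G ≤ #{v ∈ univ.erase c | 4 ≤ ecc G v} + 1 := by
  refine (domNum_le_card _ (IsDominating.of_forall_exists fun x => ?_)).trans (card_insert_le c _)
  by_cases hx : x ≠ c ∧ 4 ≤ ecc G x
  · exact ⟨x, by simp [hx.1, hx.2], Or.inl rfl⟩
  · refine ⟨c, by simp, ?_⟩
    by_cases hxc : x = c
    · exact Or.inl hxc.symm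
    · simp only [not_and, not_le] at hx
      exact hdom x (by have := hx hxc; omega)

lemma three_le_ecc_of_ne (hc : ∀ v, ecc G v ≤ 2 → v = c) {v : V} (hv : v ≠ c) : 3 ≤ ecc G v := by
  by_contra! h
  exact hv (hc v (by omega))

lemma IsParentMap.one_div_add_one_div_le_edgeBound [Fintype V] {par : V → V} {h : V → ℕ}
    (hp : IsParentMap G c par h) (hG : G.Connected) (h2 : ∀ v, 2 ≤ ecc G v)
    (hc : ∀ v, ecc G v ≤ 2 → v = c) {v : V} (hv : v ≠ c) :
    (1 / ecc G v + 1 / ecc G (par v) : ℝ) ≤ edgeBound (ecc G v) :=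
  _root_.one_div_add_one_div_le_edgeBound (three_le_ecc_of_ne hc hv) (h2 _)
    (ecc_le_ecc_add_one_of_adj hG (hp v hv).1)

end SimpleGraph

namespace SimpleGraph.IsTree

variable {n g : ℕ} {T : SimpleGraph (Fin n)} {c : Fin n}

lemma nonempty_iso_Tnb_of_tight {par : Fin n → Fin n} {h : Fin n → ℕ} (hT : T.IsTree)
    (hd : domNum T = g) (hn : 2 * g ≤ n) (hp : IsParentMap T c par h) (h2 : ∀ v, 2 ≤ ecc T v)
    (hc : ∀ v, ecc T v ≤ 2 → v = c) (hB : #{v ∈ univ.erase c | 4 ≤ ecc T v} + 1 = g)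
    (htight : ∀ v ≠ c, (1 / ecc T v + 1 / ecc T (par v) : ℝ) = edgeBound (ecc T v)) :
    Nonempty (T ≃g Tnb n g) := by
  classical
  set B := {v ∈ univ.erase c | 4 ≤ ecc T v}
  have hmemB {v : Fin n} : v ∈ B ↔ v ≠ c ∧ 4 ≤ ecc T v := by simp [B]
  have hecc {v : Fin n} (hv : v ≠ c) := eq_of_one_div_add_one_div_eq_edgeBound
    (three_le_ecc_of_ne hc hv) (h2 _) (ecc_le_ecc_add_one_of_adj hT.connected (hp v hv).1)
    (htight v hv)
  have hparA : ∀ v ≠ c, v ∉ B → par v = c := fun v hv hvB =>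
    hc _ ((hecc hv).2 (by simp only [hmemB, not_and, not_le] at hvB; exact hvB hv)).le
  obtain ⟨a, ha, haB⟩ : ∃ a ∈ univ.erase c, a ∉ B := exists_mem_notMem_of_card_lt_card (by
    rw [card_erase_of_mem (mem_univ c), card_univ, Fintype.card_fin]
    omega)
  have hcc : ecc T c = 2 := by
    have ha' := ne_of_mem_erase ha
    rw [← hparA a ha' haB]
    exact (hecc ha').2 (by simp only [hmemB, not_and, not_le] at haB; exact haB ha')
  have hparB : ∀ v ∈ B, par v ≠ c ∧ par v ∉ B := by
    intro v hv
    have h3 := ((hecc (hmemB.1 hv).1).1 (hmemB.1 hv).2).2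
    refine ⟨fun h => ?_, fun h => ?_⟩
    · rw [h] at h3
      omega
    · have := (hmemB.1 h).2
      omega
  -- `{c} ∪ par '' B` dominates `T`, so `par` cannot merge two vertices of `B`
  have hinj : Set.InjOn par B := by
    refine card_image_iff.1 (le_antisymm card_image_le ?_)
    refine Nat.le_of_add_le_add_right (hB ▸ hd ▸ (domNum_le_card _
      (IsDominating.of_forall_exists fun x => ?_)).trans (card_insert_le c (B.image par)))
    by_cases hxc : x = c
    · exact ⟨c, by simp, Or.inl hxc.symm⟩
    by_cases hxB : x ∈ B
    · exact ⟨par x, mem_coe.2 (mem_insert_of_mem (mem_image_of_mem par hxB)),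
        Or.inr (hp x hxc).1.symm⟩
    · exact ⟨c, by simp, Or.inr (hparA x hxc hxB ▸ (hp x hxc).1.symm)⟩
  exact nonempty_iso_Tnb (hT.adj_iff_of_isParentMap hp) hB hn (by simp [B]) hinj hparB hparA

theorem ree_le_and_nonempty_iso (hT : T.IsTree) (hd : domNum T = g) (hn : 2 * g ≤ n)
    (h2 : ∀ v, 2 ≤ ecc T v) (hc : ∀ v, ecc T v ≤ 2 → v = c)
    (hdom : ∀ v, ecc T v ≤ 3 → c = v ∨ T.Adj c v) :
    ree T ≤ (10 * n - 3 * g - 7) / 12 ∧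
      (ree T = (10 * n - 3 * g - 7) / 12 → Nonempty (T ≃g Tnb n g)) := by
  classical
  obtain ⟨par, hp⟩ := hT.connected.exists_isParentMap c
  have hle : ∀ v ∈ univ.erase c, (1 / ecc T v + 1 / ecc T (par v) : ℝ) ≤ edgeBound (ecc T v) :=
    fun v hv => hp.one_div_add_one_div_le_edgeBound hT.connected h2 hc (ne_of_mem_erase hv)
  set k := #{v ∈ univ.erase c | 4 ≤ ecc T v}
  have hk : g ≤ k + 1 := by
    rw [← hd]
    exact domNum_le_card_filter_add_one hdom
  have hsum : ∑ v ∈ univ.erase c, edgeBound (ecc T v) =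
      (10 * n - 3 * g - 7) / 12 - (k + 1 - g) / 4 := by
    rw [sum_edgeBound, card_erase_of_mem (mem_univ _), card_univ, Fintype.card_fin,
      Nat.cast_sub c.pos]
    push_cast
    ring
  have hk' : (g : ℝ) ≤ k + 1 := by exact_mod_cast hk
  have hsum_le := sum_le_sum hle
  rw [hT.ree_eq_sum hp]
  refine ⟨by linarith, fun heq => ?_⟩
  have hkg : k + 1 = g := by
    have : (k + 1 : ℝ) ≤ g := by linarith
    exact_mod_cast le_antisymm (by exact_mod_cast this) hk
  have htight := (sum_eq_sum_iff_of_le hle).1 (by linarith)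
  exact hT.nonempty_iso_Tnb_of_tight hd hn hp h2 hc hkg fun v hv => htight v (by simp [hv])

end SimpleGraph.IsTree

/-- for γ ≥ 3 and a tree T on n vertices with domination number γ,
ξ^{ee}(T) ≤ (10n - 3γ - 7)/12 with equality iff T ≅ T_{n,γ}. -/
theorem stmt13 (n g : ℕ) (hg : 3 ≤ g)
    (T : SimpleGraph (Fin n)) (hT : T.IsTree) (hd : domNum T = g) :
    ree T ≤ (10 * (n : ℝ) - 3 * (g : ℝ) - 7) / 12 ∧
    (ree T = (10 * (n : ℝ) - 3 * (g : ℝ) - 7) / 12 ↔ Nonempty (T ≃g Tnb n g)) := by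
  have hgn : g ≤ n := hd ▸ domNum_le_card_univ.trans_eq (Fintype.card_fin n)
  have : Nontrivial (Fin n) := Fin.nontrivial_iff_two_le.2 (by omega)
  have : NeZero n := ⟨by omega⟩
  have hn : 2 * g ≤ n := by
    simpa [hd] using two_mul_domNum_le_card hT.connected.preconnected.exists_adj_of_nontrivial
  obtain ⟨c, h2, hc, hdom⟩ := hT.exists_root (hd ▸ hg)
  obtain ⟨hle, hiso⟩ := hT.ree_le_and_nonempty_iso hd hn h2 hc hdom
  exact ⟨hle, hiso, fun ⟨φ⟩ => (Iso.ree_eq φ).symm.trans (ree_tnb hn hg ((Iso.isTree_iff φ).1 hT))⟩
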